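/- arXiv:math/0611909 — 2 statements merged into one kernel-verified Lean document; each statement's English description precedes it below -/
import Mathlib

section
/- Let f be a global spacelike solution with f(0) > 0, f'(0) ≥ 0, whose first integral c := C_f satisfies c < 1. Then there exists τ ∈ ℝ such that f(τ + t) = f(τ − t) for all t ∈ ℝ (i.e. t ↦ f(t + τ) is an even function). Moreover, if c = 0 then f(τ + t) = √(1 + t²) for all t ∈ ℝ. -/
open Real Filter Set Topology

lemma ode_unique_global {W : ℝ × ℝ → ℝ × ℝ}
    (F G : ℝ → ℝ × ℝ)
    (hWF : ∀ t, ContDiffAt ℝ 1 W (F t))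
    (hF : ∀ t, HasDerivAt F (W (F t)) t)
    (hG : ∀ t, HasDerivAt G (W (G t)) t)
    (h0 : F 0 = G 0) : ∀ t, F t = G t := by
  have hFc : Continuous F := continuous_iff_continuousAt.mpr fun t => (hF t).continuousAt
  have hGc : Continuous G := continuous_iff_continuousAt.mpr fun t => (hG t).continuousAt
  set A : Set ℝ := {t | F t = G t} with hA
  have hclosed : IsClosed A := isClosed_eq hFc hGc
  have hopen : IsOpen A := by
    rw [isOpen_iff_mem_nhds]
    intro t₀ ht₀
    have ht₀' : F t₀ = G t₀ := ht₀
    obtain ⟨K, s, hs, hlip⟩ := (hWF t₀).exists_lipschitzOnWith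
    have hFs : ∀ᶠ t in 𝓝 t₀, HasDerivAt F (W (F t)) t ∧ F t ∈ s :=
      (Eventually.of_forall hF).and (hFc.continuousAt.preimage_mem_nhds hs)
    have hGs : ∀ᶠ t in 𝓝 t₀, HasDerivAt G (W (G t)) t ∧ G t ∈ s :=
      (Eventually.of_forall hG).and
        (hGc.continuousAt.preimage_mem_nhds (ht₀' ▸ hs))
    have := ODE_solution_unique_of_eventually (v := fun _ => W) (s := fun _ => s)
      (Eventually.of_forall fun _ => hlip) hFs hGs ht₀'
    exact this.mono fun t h => h
  have : A = univ := IsClopen.eq_univ ⟨hclosed, hopen⟩ ⟨0, h0⟩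
  intro t; exact (this ▸ mem_univ t : t ∈ A)


/-- A global spacelike solution: a `C²` function `f : ℝ → ℝ` with `|f'| < 1` and
`f'' = f^(n-1) (1 - f'^2)^((n+2)/2)` on all of `ℝ`. -/
def IsGSS (n : ℕ) (f : ℝ → ℝ) : Prop :=
  ContDiff ℝ 2 f ∧
  ∀ t : ℝ, |deriv f t| < 1 ∧
    deriv (deriv f) t = f t ^ (n - 1) * (1 - (deriv f t) ^ 2) ^ ((n + 2 : ℝ) / 2)

/-- The first integral `C_f = (1 - f'(0)²)^(-n/2) - f(0)^n` of a global spacelike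
solution (this quantity is independent of the point where it is evaluated). -/
noncomputable def firstIntegral (n : ℕ) (f : ℝ → ℝ) : ℝ :=
  (1 - (deriv f 0) ^ 2) ^ (-(n : ℝ) / 2) - f 0 ^ n

variable {n : ℕ} {f : ℝ → ℝ}

lemma gss_d1 (hf : IsGSS n f) (t : ℝ) : HasDerivAt f (deriv f t) t :=
  ((hf.1.differentiable (by norm_num)) t).hasDerivAt

lemma gss_deriv_diff (hf : IsGSS n f) : Differentiable ℝ (deriv f) := by
  have := (contDiff_succ_iff_deriv.mp (by norm_num at hf ⊢; exact hf.1 : ContDiff ℝ (1+1) f)).2.2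
  exact this.differentiable one_ne_zero

lemma gss_d2 (hf : IsGSS n f) (t : ℝ) : HasDerivAt (deriv f) (deriv (deriv f) t) t :=
  (gss_deriv_diff hf t).hasDerivAt

lemma gss_A_pos (hf : IsGSS n f) (t : ℝ) : 0 < 1 - (deriv f t) ^ 2 := by
  have := (hf.2 t).1
  rw [abs_lt] at this
  nlinarith [this.1, this.2]

lemma gss_const (hn : 2 ≤ n) (hf : IsGSS n f) (t : ℝ) :
    (1 - (deriv f t) ^ 2) ^ (-(n : ℝ) / 2) - f t ^ n = firstIntegral n f := by
  have key : ∀ s : ℝ, HasDerivAt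
      (fun u => (1 - (deriv f u) ^ 2) ^ (-(n : ℝ) / 2) - f u ^ n) 0 s := by
    intro s
    have hA : 0 < 1 - (deriv f s) ^ 2 := gss_A_pos hf s
    have h1 : HasDerivAt (fun u => 1 - (deriv f u) ^ 2)
        (-(2 * deriv f s * deriv (deriv f) s)) s := by
      have h := (gss_d2 hf s).pow 2
      have h' := (hasDerivAt_const s (1:ℝ)).sub h
      refine h'.congr_deriv ?_
      push_cast; ring
    have h2 := h1.rpow_const (p := -(n : ℝ) / 2) (Or.inl hA.ne')
    have h3 := (gss_d1 hf s).pow n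
    have h4 := h2.sub h3
    refine h4.congr_deriv ?_
    have hf2 := (hf.2 s).2
    have hkey : (1 - (deriv f s) ^ 2) ^ (-(n : ℝ) / 2 - 1) *
        (1 - (deriv f s) ^ 2) ^ ((n + 2 : ℝ) / 2) = 1 := by
      rw [← Real.rpow_add hA]
      rw [show -(n : ℝ) / 2 - 1 + (n + 2) / 2 = 0 by ring, Real.rpow_zero]
    rw [hf2]
    have hnn : ((n - 1 : ℕ) : ℝ) = (n : ℝ) - 1 := by
      have : 1 ≤ n := le_trans one_le_two hn
      push_cast [this]; ring
    linear_combination ((n : ℝ) * f s ^ (n - 1) * deriv f s) * hkey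
  have hconst := is_const_of_deriv_eq_zero
    (fun s => (key s).differentiableAt) (fun s => (key s).deriv) t 0
  simpa [firstIntegral] using hconst

lemma gss_pow_lb (hn : 2 ≤ n) (hf : IsGSS n f) (t : ℝ) :
    1 - firstIntegral n f ≤ f t ^ n := by
  have h := gss_const hn hf t
  have hA := gss_A_pos hf t
  have hA1 : 1 - (deriv f t) ^ 2 ≤ 1 := by nlinarith [sq_nonneg (deriv f t)]
  have h1 : 1 ≤ (1 - (deriv f t) ^ 2) ^ (-(n : ℝ) / 2) :=
    Real.one_le_rpow_of_pos_of_le_one_of_nonpos hA hA1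
      (by
        have hnn : (0:ℝ) ≤ (n : ℝ) := Nat.cast_nonneg n
        linarith)
  linarith

lemma gss_pos (hn : 2 ≤ n) (hf : IsGSS n f) (h0 : 0 < f 0)
    (hc : firstIntegral n f < 1) (t : ℝ) : 0 < f t := by
  have hne : ∀ s : ℝ, f s ≠ 0 := by
    intro s hs
    have h := gss_pow_lb hn hf s
    rw [hs, zero_pow (by omega : n ≠ 0)] at h
    linarith
  by_contra hle
  push_neg at hle
  have hlt : f t < 0 := lt_of_le_of_ne hle (hne t)
  have hcont : Continuous f := hf.1.continuous
  have hmem : (0:ℝ) ∈ Set.uIcc (f t) (f 0) := by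
    rw [Set.mem_uIcc]; left; exact ⟨hlt.le, h0.le⟩
  obtain ⟨s, _, hs⟩ := intermediate_value_uIcc hcont.continuousOn hmem
  exact hne s hs

lemma gss_exists_tau (hn : 2 ≤ n) (hf : IsGSS n f) (h0 : 0 < f 0)
    (h0' : 0 ≤ deriv f 0) (hc : firstIntegral n f < 1) :
    ∃ τ : ℝ, deriv f τ = 0 := by
  set c := firstIntegral n f with hcdef
  have hfpos : ∀ t, 0 < f t := gss_pos hn hf h0 hc
  -- first find t₁ ≤ 0 with deriv f t₁ ≤ 0
  have hstep : ∃ t₁ ≤ (0:ℝ), deriv f t₁ ≤ 0 := by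
    by_contra hpos
    push_neg at hpos
    -- f is monotone on (-∞, 0]
    have hmono : ∀ s ≤ (0:ℝ), f s ≤ f 0 := by
      intro s hs
      rcases eq_or_lt_of_le hs with h | h
      · rw [h]
      · have : MonotoneOn f (Set.Icc s 0) := by
          apply monotoneOn_of_deriv_nonneg (convex_Icc s 0)
            hf.1.continuous.continuousOn
            (fun x _ => ((gss_d1 hf x).differentiableAt).differentiableWithinAt)
          intro x hx
          rw [interior_Icc] at hx
          exact (hpos x hx.2.le).le
        exact this ⟨le_refl s, hs⟩ ⟨hs, le_refl 0⟩ hs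
    set B := c + f 0 ^ n with hBdef
    have hB1 : 1 ≤ B := by have := gss_pow_lb hn hf 0; simp only [hBdef]; linarith
    have hB0 : 0 < B := lt_of_lt_of_le one_pos hB1
    have hnR : (0:ℝ) < n := by exact_mod_cast lt_of_lt_of_le two_pos hn
    set δ := (1 - c) / f 0 * B ^ (-((n:ℝ)+2)/n) with hδdef
    have hδ : 0 < δ := by
      apply mul_pos (div_pos (by linarith) h0) (Real.rpow_pos_of_pos hB0 _)
    have hlb : ∀ s ≤ (0:ℝ), δ ≤ deriv (deriv f) s := by
      intro s hs
      have hf2 := (hf.2 s).2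
      have hA := gss_A_pos hf s
      have hfs := hfpos s
      have hsle : f s ≤ f 0 := hmono s hs
      have h1 : (1 - c) / f 0 ≤ f s ^ (n-1) := by
        have hfn : 1 - c ≤ f s ^ n := gss_pow_lb hn hf s
        have hpow : f s ^ (n-1) * f s = f s ^ n := by
          rw [← pow_succ]; congr 1; omega
        rw [div_le_iff₀ h0]
        calc 1 - c ≤ f s ^ n := hfn
          _ = f s ^ (n-1) * f s := hpow.symm
          _ ≤ f s ^ (n-1) * f 0 := by
              exact mul_le_mul_of_nonneg_left hsle (pow_nonneg hfs.le _)
      have h2 : B ^ (-((n:ℝ)+2)/n) ≤ (1 - deriv f s ^ 2) ^ ((n + 2 : ℝ)/2) := by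
        have hAB : (1 - deriv f s ^ 2) ^ (-(n:ℝ)/2) ≤ B := by
          have hcs := gss_const hn hf s
          have hfn : f s ^ n ≤ f 0 ^ n := pow_le_pow_left₀ hfs.le hsle n
          simp only [hBdef]; linarith
        have hApow : B ^ (-2/(n:ℝ)) ≤ 1 - deriv f s ^ 2 := by
          have hexp : -2/(n:ℝ) ≤ 0 := by
            apply div_nonpos_of_nonpos_of_nonneg <;> linarith
          have h' := Real.rpow_le_rpow_of_nonpos (Real.rpow_pos_of_pos hA _) hAB hexp
          rwa [← Real.rpow_mul hA.le, show -(n:ℝ)/2 * (-2/(n:ℝ)) = 1 by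
            field_simp, Real.rpow_one] at h'
        calc B ^ (-((n:ℝ)+2)/n) = (B ^ (-2/(n:ℝ))) ^ ((n + 2 : ℝ)/2) := by
              rw [← Real.rpow_mul hB0.le]; congr 1; field_simp
          _ ≤ (1 - deriv f s ^ 2) ^ ((n + 2 : ℝ)/2) :=
              Real.rpow_le_rpow (Real.rpow_pos_of_pos hB0 _).le hApow (by positivity)
      rw [hf2, hδdef]
      exact mul_le_mul h1 h2 (Real.rpow_pos_of_pos hB0 _).le (pow_nonneg hfs.le _)
    set t₁ := -(2/δ) with ht₁def
    have ht₁ : t₁ < 0 := by rw [ht₁def]; simp; positivity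
    have hmono2 : MonotoneOn (fun s => deriv f s - δ * s) (Set.Icc t₁ 0) := by
      apply monotoneOn_of_deriv_nonneg (convex_Icc t₁ 0)
      · exact ((gss_deriv_diff hf).continuous.sub (by continuity)).continuousOn
      · exact fun x _ => ((gss_deriv_diff hf).sub (by fun_prop)).differentiableAt.differentiableWithinAt
      · intro x hx
        rw [interior_Icc] at hx
        have h1 : HasDerivAt (fun s : ℝ => δ * s) δ x := by
          simpa using (hasDerivAt_id x).const_mul δ
        have hd : deriv (fun s => deriv f s - δ * s) x = deriv (deriv f) x - δ := by
          rw [deriv_fun_sub ((gss_deriv_diff hf) x) h1.differentiableAt, h1.deriv]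
        rw [hd]
        linarith [hlb x hx.2.le]
    have hkey := hmono2 (Set.mem_Icc.mpr ⟨le_refl t₁, ht₁.le⟩)
      (Set.mem_Icc.mpr ⟨ht₁.le, le_refl 0⟩) ht₁.le
    simp only at hkey
    have hδt : δ * t₁ = -2 := by rw [ht₁def]; field_simp
    have hd1 := hpos t₁ ht₁.le
    have habs := (hf.2 0).1
    rw [abs_lt] at habs
    linarith [hkey, habs.2]
  obtain ⟨t₁, ht₁0, ht₁⟩ := hstep
  have hcont : Continuous (deriv f) := (gss_deriv_diff hf).continuous
  have hmem : (0:ℝ) ∈ Set.uIcc (deriv f t₁) (deriv f 0) := by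
    rw [Set.mem_uIcc]; left; exact ⟨ht₁, h0'⟩
  obtain ⟨τ, _, hτ⟩ := intermediate_value_uIcc hcont.continuousOn hmem
  exact ⟨τ, hτ⟩

noncomputable def Wfield (n : ℕ) : ℝ × ℝ → ℝ × ℝ :=
  fun p => (p.2, p.1 ^ (n - 1) * (1 - p.2 ^ 2) ^ ((n + 2 : ℝ) / 2))

lemma Wfield_contDiffAt {n : ℕ} {p : ℝ × ℝ} (hp : p.2 ^ 2 < 1) :
    ContDiffAt ℝ 1 (Wfield n) p := by
  apply ContDiffAt.prodMk contDiffAt_snd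
  apply ContDiffAt.mul (contDiffAt_fst.pow _)
  apply ContDiffAt.rpow_const_of_ne (contDiffAt_const.sub (contDiffAt_snd.pow 2))
  intro h
  nlinarith [hp]

lemma gss_F_sol (hf : IsGSS n f) (τ t : ℝ) :
    HasDerivAt (fun t => (f (τ + t), deriv f (τ + t)))
      (Wfield n (f (τ + t), deriv f (τ + t))) t := by
  have hinner : HasDerivAt (fun t : ℝ => τ + t) 1 t := (hasDerivAt_id t).const_add τ
  have h1 : HasDerivAt (fun t => f (τ + t)) (deriv f (τ + t)) t := by
    simpa [Function.comp_def] using (gss_d1 hf (τ + t)).comp t hinner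
  have h2 : HasDerivAt (fun t => deriv f (τ + t)) (deriv (deriv f) (τ + t)) t := by
    simpa [Function.comp_def] using (gss_d2 hf (τ + t)).comp t hinner
  have h3 := h1.prodMk h2
  rw [(hf.2 (τ + t)).2] at h3
  exact h3

lemma gss_G_sol (hf : IsGSS n f) (τ t : ℝ) :
    HasDerivAt (fun t => (f (τ - t), -deriv f (τ - t)))
      (Wfield n (f (τ - t), -deriv f (τ - t))) t := by
  have hinner : HasDerivAt (fun t : ℝ => τ - t) (-1) t := by
    simpa using (hasDerivAt_id t).const_sub τ
  have h1 : HasDerivAt (fun t => f (τ - t)) (-deriv f (τ - t)) t := by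
    have := (gss_d1 hf (τ - t)).comp t hinner
    simpa [mul_comm, Function.comp_def] using this
  have h2 : HasDerivAt (fun t => -deriv f (τ - t)) (deriv (deriv f) (τ - t)) t := by
    have := ((gss_d2 hf (τ - t)).comp t hinner).neg
    exact this.congr_deriv (by simp)
  have h3 := h1.prodMk h2
  rw [(hf.2 (τ - t)).2] at h3
  simpa [Wfield, neg_sq] using h3

lemma catenoid_sol (n : ℕ) (hn : 2 ≤ n) (t : ℝ) :
    HasDerivAt (fun t : ℝ => ((1 + t^2) ^ ((1:ℝ)/2), t * (1 + t^2) ^ (-(1:ℝ)/2)))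
      (Wfield n ((1 + t^2) ^ ((1:ℝ)/2), t * (1 + t^2) ^ (-(1:ℝ)/2))) t := by
  have hP : (0:ℝ) < 1 + t^2 := by positivity
  have hb : HasDerivAt (fun t : ℝ => 1 + t^2) (2*t) t := by
    simpa using ((hasDerivAt_id t).pow 2).const_add 1
  have h1 : HasDerivAt (fun t : ℝ => (1 + t^2) ^ ((1:ℝ)/2))
      (t * (1 + t^2) ^ (-(1:ℝ)/2)) t := by
    have h := hb.rpow_const (p := (1:ℝ)/2) (Or.inl hP.ne')
    convert h using 1
    rw [show (1:ℝ)/2 - 1 = -(1:ℝ)/2 by norm_num]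
    ring
  have hr := hb.rpow_const (p := -(1:ℝ)/2) (Or.inl hP.ne')
  have h2 : HasDerivAt (fun t : ℝ => t * (1 + t^2) ^ (-(1:ℝ)/2))
      ((1 + t^2) ^ (-(3:ℝ)/2)) t := by
    have hmul := (hasDerivAt_id t).mul hr
    refine hmul.congr_deriv ?_
    have hPP : (1 + t^2) * (1 + t^2) ^ (-(3:ℝ)/2) = (1 + t^2) ^ (-(1:ℝ)/2) := by
      have h := Real.rpow_add hP 1 (-(3:ℝ)/2)
      rw [show (1:ℝ) + -(3:ℝ)/2 = -(1:ℝ)/2 by norm_num, Real.rpow_one] at h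
      linarith [h]
    rw [show -(1:ℝ)/2 - 1 = -(3:ℝ)/2 by norm_num]
    simp only [id_eq]
    linear_combination (-1 : ℝ) * hPP
  have hW : Wfield n ((1 + t^2) ^ ((1:ℝ)/2), t * (1 + t^2) ^ (-(1:ℝ)/2)) =
      (t * (1 + t^2) ^ (-(1:ℝ)/2), (1 + t^2) ^ (-(3:ℝ)/2)) := by
    unfold Wfield
    simp only [Prod.mk.injEq, true_and]
    have e1 : ((1 + t^2) ^ ((1:ℝ)/2)) ^ (n - 1) = (1 + t^2) ^ (((n:ℝ) - 1)/2) := by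
      rw [← Real.rpow_natCast ((1 + t^2) ^ ((1:ℝ)/2)) (n - 1), ← Real.rpow_mul hP.le]
      congr 1
      have : ((n - 1 : ℕ) : ℝ) = (n:ℝ) - 1 := by
        have h1 : 1 ≤ n := by omega
        push_cast [h1]; ring
      rw [this]; ring
    have e2 : (t * (1 + t^2) ^ (-(1:ℝ)/2))^2 = t^2 * (1 + t^2) ^ (-(1:ℝ)) := by
      rw [mul_pow, ← Real.rpow_natCast ((1 + t^2) ^ (-(1:ℝ)/2)) 2, ← Real.rpow_mul hP.le]
      norm_num
    have e3 : 1 - t^2 * (1 + t^2) ^ (-(1:ℝ)) = (1 + t^2) ^ (-(1:ℝ)) := by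
      rw [Real.rpow_neg_one]
      field_simp
      ring
    rw [e1, e2, e3, ← Real.rpow_mul hP.le, ← Real.rpow_add hP]
    congr 1
    ring
  rw [hW]
  exact h1.prodMk h2

/-- a global spacelike solution with `f 0 > 0`, `f' 0 ≥ 0` and first
integral `c < 1` is even about some `τ`; if moreover `c = 0` then
`f (τ + t) = √(1 + t²)`. -/
theorem stmt_6 (n : ℕ) (hn : 2 ≤ n) (f : ℝ → ℝ) (hf : IsGSS n f)
    (h0 : 0 < f 0) (h0' : 0 ≤ deriv f 0) (hc : firstIntegral n f < 1) :
    ∃ τ : ℝ, (∀ t : ℝ, f (τ + t) = f (τ - t)) ∧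
      (firstIntegral n f = 0 → ∀ t : ℝ, f (τ + t) = Real.sqrt (1 + t ^ 2)) := by
  obtain ⟨τ, hτ⟩ := gss_exists_tau hn hf h0 h0' hc
  have hfpos : ∀ t, 0 < f t := gss_pos hn hf h0 hc
  have hsq : ∀ s : ℝ, (deriv f s) ^ 2 < 1 := by
    intro s
    have := (hf.2 s).1
    rw [abs_lt] at this
    nlinarith [this.1, this.2]
  refine ⟨τ, ?_, ?_⟩
  · have heq := ode_unique_global (W := Wfield n)
      (fun t => (f (τ + t), deriv f (τ + t)))
      (fun t => (f (τ - t), -deriv f (τ - t)))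
      (fun t => Wfield_contDiffAt (hsq (τ + t)))
      (fun t => gss_F_sol hf τ t)
      (fun t => gss_G_sol hf τ t)
      (by simp [hτ])
    intro t
    exact congrArg Prod.fst (heq t)
  · intro hc0 t
    have hfτ : f τ = 1 := by
      have hcs := gss_const hn hf τ
      rw [hτ, hc0] at hcs
      norm_num at hcs
      -- hcs : f τ ^ n = 1 (roughly)
      have hp := hfpos τ
      rcases lt_trichotomy (f τ) 1 with h | h | h
      · exfalso
        have := pow_lt_one₀ hp.le h (by omega : n ≠ 0)
        nlinarith [hcs]
      · exact h
      · exfalso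
        have := one_lt_pow₀ h (by omega : n ≠ 0)
        nlinarith [hcs]
    have heq := ode_unique_global (W := Wfield n)
      (fun t => (f (τ + t), deriv f (τ + t)))
      (fun t : ℝ => ((1 + t^2) ^ ((1:ℝ)/2), t * (1 + t^2) ^ (-(1:ℝ)/2)))
      (fun t => Wfield_contDiffAt (hsq (τ + t)))
      (fun t => gss_F_sol hf τ t)
      (fun t => catenoid_sol n hn t)
      (by simp [hτ, hfτ, Real.one_rpow])
    have := congrArg Prod.fst (heq t)
    simp only at this
    rw [this, Real.sqrt_eq_rpow]
end

section
/- If c < 1, then the principal curvatures of the graph of u_c are uniformly bounded: there exists M > 0 such that f_c''(t)/(1 − f_c'(t)²)^{3/2} ≤ M and 1/(f_c(t)·√(1 − f_c'(t)²)) ≤ M for all t ∈ ℝ. If c = 1, then the principal curvatures of the graph of u_1 are unbounded: the function t ↦ 1/(f_1(t)·√(1 − f_1'(t)²)) is unbounded on ℝ. -/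
open Real Filter

/-- `IsFc n c f` says that `f` is the normalized global spacelike solution `f_c`:
for `c < 1` it satisfies `f 0 = (1-c)^(1/n)`, `f' 0 = 0` (so its first integral is `c`);
for `c = 1` it satisfies `f 0 = 1`, `f' 0 = √(1 - 2^(-2/n))` (first integral `1`,
and `f` is strictly increasing). -/
def IsFc (n : ℕ) (c : ℝ) (f : ℝ → ℝ) : Prop :=
  IsGSS n f ∧
  (c < 1 → f 0 = (1 - c) ^ ((1 : ℝ) / n) ∧ deriv f 0 = 0) ∧
  (c = 1 → f 0 = 1 ∧ deriv f 0 = Real.sqrt (1 - (2 : ℝ) ^ (-(2 : ℝ) / n)))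

lemma gss_diff {f : ℝ → ℝ} (hC : ContDiff ℝ 2 f) :
    Differentiable ℝ f ∧ Differentiable ℝ (deriv f) ∧ Continuous (deriv f) := by
  rw [show (2 : WithTop ℕ∞) = 1 + 1 from rfl, contDiff_succ_iff_deriv] at hC
  obtain ⟨h1, -, h2⟩ := hC
  rw [contDiff_one_iff_deriv] at h2
  exact ⟨h1, h2.1, h2.1.continuous⟩

lemma gss_pos_s8 {n : ℕ} {f : ℝ → ℝ} (hf : IsGSS n f) (t : ℝ) :
    0 < 1 - (deriv f t) ^ 2 := by
  have h := (hf.2 t).1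
  nlinarith [sq_abs (deriv f t), abs_nonneg (deriv f t)]

lemma gss_energy {n : ℕ} {f : ℝ → ℝ} (hf : IsGSS n f) (t : ℝ) :
    (1 - (deriv f t) ^ 2) ^ (-(n : ℝ) / 2) - (f t) ^ n
      = (1 - (deriv f 0) ^ 2) ^ (-(n : ℝ) / 2) - (f 0) ^ n := by
  obtain ⟨hd1, hd2, -⟩ := gss_diff hf.1
  set E : ℝ → ℝ := fun s => (1 - (deriv f s) ^ 2) ^ (-(n : ℝ) / 2) - (f s) ^ n with hE
  have key : ∀ s : ℝ, HasDerivAt E 0 s := by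
    intro s
    have hx : 0 < 1 - (deriv f s) ^ 2 := gss_pos_s8 hf s
    have hA : HasDerivAt (fun t => 1 - (deriv f t) ^ 2)
        (0 - 2 * deriv f s ^ 1 * deriv (deriv f) s) s :=
      (hasDerivAt_const s (1:ℝ)).sub ((hd2 s).hasDerivAt.pow 2)
    have hB : HasDerivAt (fun t => (1 - (deriv f t) ^ 2) ^ (-(n : ℝ) / 2))
        ((-(n : ℝ) / 2 * (1 - (deriv f s) ^ 2) ^ (-(n : ℝ) / 2 - 1)) *
          (0 - 2 * deriv f s ^ 1 * deriv (deriv f) s)) s :=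
      (Real.hasDerivAt_rpow_const (Or.inl hx.ne')).comp s (h := fun t => 1 - deriv f t ^ 2) hA
    have hC : HasDerivAt (fun t => (f t) ^ n)
        ((n : ℝ) * f s ^ (n - 1) * deriv f s) s := (hd1 s).hasDerivAt.pow n
    have := hB.sub hC
    refine this.congr_deriv ?_
    symm
    rw [(hf.2 s).2]
    have hone : (1 - (deriv f s) ^ 2) ^ (-(n : ℝ) / 2 - 1) *
        (1 - (deriv f s) ^ 2) ^ ((n + 2 : ℝ) / 2) = 1 := by
      rw [← Real.rpow_add hx, show -(n:ℝ)/2 - 1 + ((n:ℝ)+2)/2 = 0 by ring, Real.rpow_zero]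
    set d1 := deriv f s
    set F := f s ^ (n - 1)
    linear_combination (2 * d1 * F * (-(n : ℝ) / 2)) * hone
  exact is_const_of_deriv_eq_zero (fun s => (key s).differentiableAt)
    (fun s => (key s).deriv) t 0

lemma part_lt {n : ℕ} (hn : 2 ≤ n) {c : ℝ} (hc : c < 1) {f : ℝ → ℝ} (hf : IsGSS n f)
    (h0 : f 0 = (1 - c) ^ ((1 : ℝ) / n)) (h0' : deriv f 0 = 0) :
    ∃ M : ℝ, 0 < M ∧ ∀ t : ℝ,
      deriv (deriv f) t / (1 - (deriv f t) ^ 2) ^ ((3 : ℝ) / 2) ≤ M ∧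
      1 / (f t * Real.sqrt (1 - (deriv f t) ^ 2)) ≤ M := by
  obtain ⟨hd1, hd2, hd2c⟩ := gss_diff hf.1
  have hn0 : (0 : ℝ) < n := by positivity
  have hcpos : (0 : ℝ) < 1 - c := by linarith
  have hE0 : (1 - (deriv f 0) ^ 2) ^ (-(n : ℝ) / 2) - (f 0) ^ n = c := by
    rw [h0', h0]
    have : (((1 - c) ^ ((1 : ℝ) / n)) ^ n : ℝ) = 1 - c := by
      rw [← Real.rpow_natCast ((1 - c) ^ ((1 : ℝ) / n)) n, ← Real.rpow_mul hcpos.le,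
        one_div_mul_cancel (ne_of_gt hn0), Real.rpow_one]
    rw [this]
    norm_num
  have hD : ∀ t, (1 - (deriv f t) ^ 2) ^ (-(n : ℝ) / 2) = c + f t ^ n := by
    intro t
    have := gss_energy hf t
    rw [hE0] at this
    linarith
  have hD1 : ∀ t, 1 ≤ (1 - (deriv f t) ^ 2) ^ (-(n : ℝ) / 2) := fun t =>
    Real.one_le_rpow_of_pos_of_le_one_of_nonpos (gss_pos_s8 hf t)
      (by nlinarith [sq_nonneg (deriv f t)]) (by have : (0:ℝ) ≤ (n:ℝ) := n.cast_nonneg; linarith)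
  have hfn : ∀ t, 1 - c ≤ f t ^ n := by
    intro t
    have h1 := hD t
    have h2 := hD1 t
    linarith
  have hfne : ∀ t, f t ≠ 0 := by
    intro t ht
    have := hfn t
    rw [ht, zero_pow (by omega)] at this
    linarith
  have hfpos : ∀ t, 0 < f t := by
    intro t
    by_contra hle
    push_neg at hle
    have hlt : f t < 0 := lt_of_le_of_ne hle (hfne t)
    have h0pos : 0 < f 0 := by rw [h0]; exact Real.rpow_pos_of_pos hcpos _
    have : (0 : ℝ) ∈ Set.uIcc (f t) (f 0) :=
      Set.mem_uIcc.2 (Or.inl ⟨hlt.le, h0pos.le⟩)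
    obtain ⟨s, -, hs⟩ := intermediate_value_uIcc hd1.continuous.continuousOn this
    exact hfne s hs
  -- product identity
  have hprod : ∀ t, (f t * Real.sqrt (1 - (deriv f t) ^ 2)) ^ n
      = f t ^ n * (1 - (deriv f t) ^ 2) ^ ((n : ℝ) / 2) := by
    intro t
    have hx := gss_pos_s8 hf t
    rw [mul_pow, Real.sqrt_eq_rpow, ← Real.rpow_natCast ((1 - (deriv f t) ^ 2) ^ ((1:ℝ)/2)) n,
      ← Real.rpow_mul hx.le, show (1:ℝ)/2 * (n : ℝ) = (n : ℝ)/2 by ring]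
  have hinv : ∀ t, (1 - (deriv f t) ^ 2) ^ ((n : ℝ) / 2) *
      (1 - (deriv f t) ^ 2) ^ (-(n : ℝ) / 2) = 1 := by
    intro t
    rw [← Real.rpow_add (gss_pos_s8 hf t), show (n:ℝ)/2 + -(n:ℝ)/2 = 0 by ring, Real.rpow_zero]
  set a : ℝ → ℝ := fun t => f t * Real.sqrt (1 - (deriv f t) ^ 2) with ha
  have hapos : ∀ t, 0 < a t := fun t =>
    mul_pos (hfpos t) (Real.sqrt_pos.2 (gss_pos_s8 hf t))
  have haD : ∀ t, a t ^ n * (c + f t ^ n) = f t ^ n := by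
    intro t
    rw [ha]
    rw [hprod t, ← hD t, mul_assoc, hinv t, mul_one]
  set K : ℝ := 1 - max c 0 with hK
  have hKpos : 0 < K := by
    rw [hK]
    rcases le_or_gt c 0 with h | h
    · simp [max_eq_right h]
    · rw [max_eq_left h.le]; linarith
  have hK1 : K ≤ 1 := by
    rw [hK]; have := le_max_right c 0; linarith
  -- lower and upper bounds for a^n
  have hanl : ∀ t, K ≤ a t ^ n := by
    intro t
    have h1 := haD t
    have h2 := hD t
    have h3 := hD1 t
    have h4 : 0 < c + f t ^ n := by rw [← h2]; linarith
    rcases le_or_gt c 0 with h | h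
    · have : max c 0 = 0 := max_eq_right h
      rw [hK, this]
      nlinarith
    · have : max c 0 = c := max_eq_left h.le
      rw [hK, this]
      nlinarith
  have hanu : ∀ t, a t ^ n ≤ 1 + |c| := by
    intro t
    have h1 := haD t
    have h2 := hD t
    have h3 := hD1 t
    have h4 : 0 < c + f t ^ n := by rw [← h2]; linarith
    have h5 : -|c| ≤ c := neg_abs_le c
    have h6 : (0:ℝ) ≤ |c| := abs_nonneg c
    nlinarith
  have hal : ∀ t, K ^ ((1:ℝ)/n) ≤ a t := by
    intro t
    have hm : (0:ℝ) < K ^ ((1:ℝ)/n) := Real.rpow_pos_of_pos hKpos _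
    have hmn : (K ^ ((1:ℝ)/n)) ^ n = K := by
      rw [← Real.rpow_natCast (K ^ ((1:ℝ)/n)) n, ← Real.rpow_mul hKpos.le,
        one_div_mul_cancel (ne_of_gt hn0), Real.rpow_one]
    have : (K ^ ((1:ℝ)/n)) ^ n ≤ a t ^ n := by rw [hmn]; exact hanl t
    exact le_of_pow_le_pow_left₀ (by omega) (hapos t).le this
  refine ⟨max (1 + |c|) (1 / K ^ ((1:ℝ)/n)), by positivity, fun t => ⟨?_, ?_⟩⟩
  · -- first curvature
    have hx := gss_pos_s8 hf t
    have heq : deriv (deriv f) t / (1 - (deriv f t) ^ 2) ^ ((3:ℝ)/2) = a t ^ (n - 1) := by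
      rw [(hf.2 t).2, mul_div_assoc, ← Real.rpow_sub hx, ha, mul_pow, Real.sqrt_eq_rpow,
        ← Real.rpow_natCast ((1 - (deriv f t) ^ 2) ^ ((1:ℝ)/2)) (n-1),
        ← Real.rpow_mul hx.le]
      congr 1
      have : ((n - 1 : ℕ) : ℝ) = (n : ℝ) - 1 := by
        have : 1 ≤ n := by omega
        push_cast [this]
        ring
      rw [this]
      ring
    rw [heq]
    refine le_trans ?_ (le_max_left _ _)
    rcases le_or_gt (a t) 1 with h | h
    · calc a t ^ (n-1) ≤ 1 := pow_le_one₀ (hapos t).le h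
        _ ≤ 1 + |c| := by simp [abs_nonneg]
    · calc a t ^ (n-1) ≤ a t ^ n := pow_le_pow_right₀ h.le (by omega)
        _ ≤ 1 + |c| := hanu t
  · refine le_trans ?_ (le_max_right _ _)
    exact one_div_le_one_div_of_le (Real.rpow_pos_of_pos hKpos _) (hal t)

set_option maxHeartbeats 1000000 in
lemma part_eq {n : ℕ} (hn : 2 ≤ n) {f : ℝ → ℝ} (hf : IsGSS n f)
    (h0 : f 0 = 1) (h0' : deriv f 0 = Real.sqrt (1 - (2 : ℝ) ^ (-(2 : ℝ) / n))) :
    ∀ M : ℝ, ∃ t : ℝ, M < 1 / (f t * Real.sqrt (1 - (deriv f t) ^ 2)) := by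
  obtain ⟨hd1, hd2, hd2c⟩ := gss_diff hf.1
  have hn0 : (0 : ℝ) < n := by positivity
  have h2lt : (2 : ℝ) ^ (-(2 : ℝ) / n) < 1 :=
    Real.rpow_lt_one_of_one_lt_of_neg one_lt_two (by
      rw [neg_div]; exact neg_neg_iff_pos.2 (by positivity))
  have h2pos : (0 : ℝ) < (2 : ℝ) ^ (-(2 : ℝ) / n) := Real.rpow_pos_of_pos two_pos _
  have hd0sq : (deriv f 0) ^ 2 = 1 - (2 : ℝ) ^ (-(2 : ℝ) / n) := by
    rw [h0', Real.sq_sqrt (by linarith)]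
  have hd0pos : 0 < deriv f 0 := by
    rw [h0']; exact Real.sqrt_pos.2 (by linarith)
  have hE0 : (1 - (deriv f 0) ^ 2) ^ (-(n : ℝ) / 2) - (f 0) ^ n = 1 := by
    rw [hd0sq, h0, one_pow, show (1 : ℝ) - (1 - (2 : ℝ) ^ (-(2 : ℝ) / n))
        = (2 : ℝ) ^ (-(2 : ℝ) / n) by ring,
      ← Real.rpow_mul (by norm_num : (0:ℝ) ≤ 2),
      show -(2 : ℝ) / n * (-(n : ℝ) / 2) = 1 by field_simp, Real.rpow_one]
    norm_num
  have hD : ∀ t, (1 - (deriv f t) ^ 2) ^ (-(n : ℝ) / 2) = 1 + f t ^ n := by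
    intro t
    have := gss_energy hf t
    rw [hE0] at this
    linarith
  have hD1 : ∀ t, 1 ≤ (1 - (deriv f t) ^ 2) ^ (-(n : ℝ) / 2) := fun t =>
    Real.one_le_rpow_of_pos_of_le_one_of_nonpos (gss_pos_s8 hf t)
      (by nlinarith [sq_nonneg (deriv f t)])
      (by have : (0:ℝ) ≤ (n:ℝ) := n.cast_nonneg; linarith)
  have hx1 : ∀ t, 1 - (deriv f t) ^ 2 ≤ 1 := fun t => by nlinarith [sq_nonneg (deriv f t)]
  -- main claim: f takes arbitrarily small positive values
  have main : ∀ ε : ℝ, 0 < ε → ε ≤ 1/2 → ∃ t, 0 < f t ∧ f t < ε := by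
    intro ε hε hε2
    by_contra hcon
    push_neg at hcon
    have hge : ∀ t, ε ≤ f t := by
      intro t
      by_contra hlt
      push_neg at hlt
      have hft : f t ≤ 0 := by
        by_contra hpos
        push_neg at hpos
        exact absurd (hcon t hpos) (not_le.2 hlt)
      have hmem : ε / 2 ∈ Set.uIcc (f t) (f 0) :=
        Set.mem_uIcc.2 (Or.inl ⟨by linarith, by rw [h0]; linarith⟩)
      obtain ⟨s, -, hs⟩ := intermediate_value_uIcc hd1.continuous.continuousOn hmem
      have := hcon s (by rw [hs]; linarith)
      rw [hs] at this
      linarith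
    -- uniform lower bound on f implies uniform slope, contradiction
    have hfen : ∀ t, ε ^ n ≤ f t ^ n := fun t => pow_le_pow_left₀ hε.le (hge t) n
    set β : ℝ := (1 + ε ^ n) ^ (-(2:ℝ) / n) with hβ
    have hβ1 : β < 1 := Real.rpow_lt_one_of_one_lt_of_neg
      (by nlinarith [pow_pos hε n]) (by rw [neg_div]; exact neg_neg_iff_pos.2 (by positivity))
    have hβpos : 0 < β := Real.rpow_pos_of_pos (by nlinarith [pow_pos hε n]) _
    have hxle : ∀ t, 1 - (deriv f t) ^ 2 ≤ β := by
      intro t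
      have hx := gss_pos_s8 hf t
      have hcalc : 1 - (deriv f t) ^ 2
          = ((1 - (deriv f t) ^ 2) ^ (-(n : ℝ) / 2)) ^ (-(2:ℝ) / n) := by
        rw [← Real.rpow_mul hx.le, show -(n : ℝ) / 2 * (-(2:ℝ) / n) = 1 by field_simp,
          Real.rpow_one]
      rw [hcalc, hD t]
      exact Real.rpow_le_rpow_of_nonpos (by nlinarith [pow_pos hε n])
        (by nlinarith [hfen t]) (by
          rw [neg_div]; exact neg_nonpos_of_nonneg (by positivity))
    set δ : ℝ := Real.sqrt (1 - β) with hδ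
    have hδpos : 0 < δ := Real.sqrt_pos.2 (by linarith)
    have habs : ∀ t, δ ≤ |deriv f t| := by
      intro t
      have h1 : δ ^ 2 ≤ (deriv f t) ^ 2 := by
        rw [hδ, Real.sq_sqrt (by linarith : (0:ℝ) ≤ 1 - β)]
        have := hxle t
        linarith
      calc δ = Real.sqrt (δ ^ 2) := by rw [Real.sqrt_sq hδpos.le]
        _ ≤ Real.sqrt ((deriv f t) ^ 2) := Real.sqrt_le_sqrt h1
        _ = |deriv f t| := Real.sqrt_sq_eq_abs _
    have hdpos : ∀ t, δ ≤ deriv f t := by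
      intro t
      rcases le_abs.1 (habs t) with h | h
      · exact h
      · exfalso
        have hneg : deriv f t ≤ -δ := by linarith
        have hmem : (0:ℝ) ∈ Set.uIcc (deriv f t) (deriv f 0) :=
          Set.mem_uIcc.2 (Or.inl ⟨by linarith, hd0pos.le⟩)
        obtain ⟨s, -, hs⟩ := intermediate_value_uIcc hd2c.continuousOn hmem
        have := habs s
        rw [hs] at this
        simp at this
        linarith
    -- mean value theorem on [-(2/δ), 0]
    set t0 : ℝ := -(2 / δ) with ht0
    have ht0neg : t0 < 0 := by
      have h : 0 < 2 / δ := by positivity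
      rw [ht0]; linarith
    obtain ⟨s, -, hs⟩ := exists_hasDerivAt_eq_slope f (deriv f) ht0neg
      hd1.continuous.continuousOn (fun x _ => (hd1 x).hasDerivAt)
    have hslope : deriv f s = (f 0 - f t0) / (0 - t0) := hs
    have h2δ : (0:ℝ) - t0 = 2 / δ := by rw [ht0]; ring
    have hft0 : f 0 - f t0 = deriv f s * (2 / δ) := by
      rw [hslope, h2δ, div_mul_cancel₀ _ (ne_of_gt (by positivity : (0:ℝ) < 2 / δ))]
    have : 2 ≤ f 0 - f t0 := by
      rw [hft0]
      have h1 := hdpos s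
      have h2 : δ * (2 / δ) = 2 := by field_simp
      nlinarith [div_pos two_pos hδpos]
    have hget0 := hge t0
    rw [h0] at this
    linarith
  -- conclude
  intro M
  set K : ℝ := max M 0 + 1 with hKdef
  have hKpos : 0 < K := by
    have := le_max_right M 0
    rw [hKdef]; linarith
  set ε : ℝ := min (1 / (2 * K)) (1 / 2) with hε
  have hεpos : 0 < ε := lt_min (by positivity) (by norm_num)
  obtain ⟨t, htpos, htlt⟩ := main ε hεpos (min_le_right _ _)
  refine ⟨t, ?_⟩
  have hx := gss_pos_s8 hf t
  have hsq1 : Real.sqrt (1 - (deriv f t) ^ 2) ≤ 1 := Real.sqrt_le_one.2 (hx1 t)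
  have hsqpos : 0 < Real.sqrt (1 - (deriv f t) ^ 2) := Real.sqrt_pos.2 hx
  set A : ℝ := f t * Real.sqrt (1 - (deriv f t) ^ 2) with hA
  have hApos : 0 < A := mul_pos htpos hsqpos
  have hAlt : A < ε := by
    calc A ≤ f t * 1 := mul_le_mul_of_nonneg_left hsq1 htpos.le
      _ = f t := mul_one _
      _ < ε := htlt
  have h1 : 1 / ε < 1 / A := one_div_lt_one_div_of_lt hApos hAlt
  have h2 : 2 * K ≤ 1 / ε := by
    have hεle : ε ≤ 1 / (2 * K) := min_le_left _ _
    rw [le_div_iff₀ hεpos]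
    calc 2 * K * ε ≤ 2 * K * (1 / (2 * K)) := by
          apply mul_le_mul_of_nonneg_left hεle (by positivity)
      _ = 1 := by field_simp
  have h3 : M < K := by
    have := le_max_left M 0
    rw [hKdef]; linarith
  have : M < 2 * K := by linarith
  linarith

/-- for `c < 1` the principal curvatures of the graph of `u_c` are
uniformly bounded; for `c = 1` they are unbounded. -/
theorem stmt_8 (n : ℕ) (hn : 2 ≤ n) (c : ℝ) (hc : c ≤ 1) (f : ℝ → ℝ) (hf : IsFc n c f) :
    (c < 1 → ∃ M : ℝ, 0 < M ∧ ∀ t : ℝ,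
      deriv (deriv f) t / (1 - (deriv f t) ^ 2) ^ ((3 : ℝ) / 2) ≤ M ∧
      1 / (f t * Real.sqrt (1 - (deriv f t) ^ 2)) ≤ M) ∧
    (c = 1 → ∀ M : ℝ, ∃ t : ℝ,
      M < 1 / (f t * Real.sqrt (1 - (deriv f t) ^ 2))) := by
  obtain ⟨hgss, h1, h2⟩ := hf
  constructor
  · intro hlt
    obtain ⟨ha, hb⟩ := h1 hlt
    exact part_lt hn hlt hgss ha hb
  · intro heq
    obtain ⟨ha, hb⟩ := h2 heq
    exact part_eq hn hgss ha hb
end
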